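/- Let a, b ∈ ℝ, τ > 0, b₁ := e^{−aτ} b, and let ρ ∈ C⁰([0,∞)). Then the non-homogeneous delay differential equation ẋ(t) = a x(t) + b x(t − τ) + ρ(t) for t > 0 with zero initial condition x(t) = 0 for t ∈ [−τ, 0] has the unique solution x̄ ∈ C⁰([−τ,∞)) ∩ C¹([−τ,0]) ∩ C¹([0,∞)) given by x̄(t) = 0 for t ∈ [−τ, 0) and x̄(t) = ∫₀ᵗ e^{a(t−s)} exp_τ{b₁, t − τ − s} ρ(s) ds for t > 0. -/

import Mathlib

/-!
With `β = e^{-aτ} b`, the kernel `K u = e^{au} exp_τ{β, u - τ}` vanishes for `u < 0`, equals `1`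
at `0`, and has right derivative `a K u + b K (u - τ)` for `u ≥ 0`, because the delayed exponential
has right derivative `β exp_τ{β, t - τ}` (on each `[(k-1)τ, kτ)` it is a polynomial whose
derivative is the previous one, shifted by `τ`). The candidate `x̄` is the Volterra convolution
`∫₀ᵗ K (t - s) ρ s ds`; integrating it and swapping the order of integration gives
`x̄ t = ∫₀ᵗ (a x̄ + b x̄ (· - τ) + ρ)`, so `x̄` is a solution.

Uniqueness is the method of steps: the difference of two solutions vanishes on `[-τ, 0]`, and
on `[kτ, (k+1)τ]` its delayed term is already zero, so Grönwall's inequality forces it to vanish.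
-/

open Set Filter Topology Real intervalIntegral

noncomputable section

/-- The delayed exponential function `exp_τ{b, t}`. -/
def delayedExp (b τ t : ℝ) : ℝ :=
  if t < -τ then 0
  else if t < 0 then 1
  else ∑ j ∈ Finset.range (⌊t / τ⌋.toNat + 2),
    b ^ j * (t - ((j : ℝ) - 1) * τ) ^ j / (Nat.factorial j)

/-- `y` solves the non-homogeneous delay equation `ẏ(t) = a y(t) + b y(t−τ) + ρ(t)` for
`t > 0` with zero initial condition `y ≡ 0` on `[−τ,0]`: continuous on `[−τ,∞)` and
continuously differentiable on `[0,∞)`. -/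
def IsNonHomDelaySolution (a b τ : ℝ) (ρ y : ℝ → ℝ) : Prop :=
  ContinuousOn y (Set.Ici (-τ)) ∧
  (∀ t ∈ Set.Icc (-τ) (0:ℝ), y t = 0) ∧
  (∀ t > (0:ℝ), HasDerivAt y (a * y t + b * y (t - τ) + ρ t) t) ∧
  (∀ t ∈ Set.Ici (0:ℝ), HasDerivWithinAt y (a * y t + b * y (t - τ) + ρ t) (Set.Ici 0) t)

/-- The Duhamel-type solution
`x̄(t) = ∫₀ᵗ e^{a(t−s)} exp_τ{b₁, t−τ−s} ρ(s) ds` for `t > 0`, `x̄ = 0` on `[−τ,0]`,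
with `b₁ = e^{−aτ} b`. -/
def nonHomDelaySolution (a b τ : ℝ) (ρ : ℝ → ℝ) (t : ℝ) : ℝ :=
  if t ≤ 0 then 0
  else ∫ s in (0:ℝ)..t, Real.exp (a * (t - s)) * delayedExp (Real.exp (-a * τ) * b) τ (t - τ - s) * ρ s

open MeasureTheory

def delayedExpPoly (β τ : ℝ) (k : ℕ) (t : ℝ) : ℝ :=
  ∑ j ∈ Finset.range (k + 1), β ^ j * (t - ((j : ℝ) - 1) * τ) ^ j / (Nat.factorial j)

section DelayedExp

variable {β τ t : ℝ}

theorem delayedExpPoly_zero : delayedExpPoly β τ 0 = fun _ => 1 := by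
  funext t
  simp [delayedExpPoly]

theorem continuous_delayedExpPoly (k : ℕ) : Continuous (delayedExpPoly β τ k) := by
  unfold delayedExpPoly
  fun_prop

theorem hasDerivAt_delayedExpPoly_succ (k : ℕ) (t : ℝ) :
    HasDerivAt (delayedExpPoly β τ (k + 1)) (β * delayedExpPoly β τ k (t - τ)) t := by
  have hterm (j : ℕ) : HasDerivAt (fun u => β ^ (j + 1) * (u - j * τ) ^ (j + 1) / (j + 1).factorial)
      (β * (β ^ j * (t - τ - (j - 1) * τ) ^ j / j.factorial)) t := by
    refine (((((hasDerivAt_id' t).sub_const (j * τ)).fun_pow (j + 1)).const_mul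
      (β ^ (j + 1))).div_const ((j + 1).factorial : ℝ)).congr_deriv ?_
    push_cast [Nat.factorial_succ]
    field_simp
    ring
  have hP : delayedExpPoly β τ (k + 1) =
      fun u => ∑ j ∈ Finset.range (k + 1),
        β ^ (j + 1) * (u - j * τ) ^ (j + 1) / (j + 1).factorial + 1 := by
    funext u
    simp only [delayedExpPoly, Finset.sum_range_succ' _ (k + 1)]
    push_cast
    simp
  rw [hP, delayedExpPoly, Finset.mul_sum]
  exact (HasDerivAt.fun_sum fun j _ => hterm j).add_const 1

theorem delayedExp_of_lt (h : t < -τ) : delayedExp β τ t = 0 := if_pos h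

theorem exists_nat_mem_Ico (hτ : 0 < τ) (ht : -τ ≤ t) :
    ∃ k : ℕ, t ∈ Ico (k * τ - τ) (k * τ) := by
  have h0 : 0 ≤ (t + τ) / τ := div_nonneg (by linarith) hτ.le
  refine ⟨⌊(t + τ) / τ⌋₊, ?_, ?_⟩
  · have := (le_div_iff₀ hτ).1 (Nat.floor_le h0)
    linarith
  · have := (div_lt_iff₀ hτ).1 (Nat.lt_floor_add_one ((t + τ) / τ))
    linarith

theorem delayedExp_eq_delayedExpPoly (hτ : 0 < τ) {k : ℕ} (ht : t ∈ Ico (k * τ - τ) (k * τ)) :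
    delayedExp β τ t = delayedExpPoly β τ k t := by
  obtain ⟨ht₁, ht₂⟩ := ht
  rcases k with _ | k
  · simp only [CharP.cast_eq_zero, zero_mul, zero_sub] at ht₁ ht₂
    simp [delayedExp, delayedExpPoly_zero, ht₂, not_lt.2 ht₁]
  · push_cast at ht₁ ht₂
    have hfloor : ⌊t / τ⌋ = k := by
      rw [Int.floor_eq_iff, le_div_iff₀ hτ, div_lt_iff₀ hτ]
      push_cast
      constructor <;> linarith
    have hk : (0 : ℝ) ≤ k * τ := by positivity
    rw [delayedExp, if_neg (by linarith), if_neg (by linarith), hfloor, Int.toNat_natCast]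
    rfl

theorem delayedExp_eq_delayedExpPoly_of_mem_Icc (hτ : 0 < τ) {k : ℕ}
    (ht : t ∈ Icc (k * τ - τ) (k * τ)) : delayedExp β τ t = delayedExpPoly β τ k t := by
  rcases ht.2.lt_or_eq with hlt | rfl
  · exact delayedExp_eq_delayedExpPoly hτ ⟨ht.1, hlt⟩
  · rw [delayedExp_eq_delayedExpPoly (k := k + 1) hτ
      ⟨by push_cast; linarith, by push_cast; linarith⟩,
      delayedExpPoly, Finset.sum_range_succ]
    simp [delayedExpPoly]

theorem delayedExp_eq_one (hτ : 0 < τ) (ht : t ∈ Icc (-τ) 0) : delayedExp β τ t = 1 := by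
  rw [delayedExp_eq_delayedExpPoly_of_mem_Icc (k := 0) hτ (by simpa using ht), delayedExpPoly_zero]

theorem hasDerivWithinAt_delayedExp (hτ : 0 < τ) (ht : -τ ≤ t) :
    HasDerivWithinAt (delayedExp β τ) (β * delayedExp β τ (t - τ)) (Ici t) t := by
  obtain ⟨k, hk⟩ := exists_nat_mem_Ico hτ ht
  have hev : delayedExp β τ =ᶠ[𝓝[Ici t] t] delayedExpPoly β τ k := by
    filter_upwards [Ico_mem_nhdsGE hk.2] with u hu
    exact delayedExp_eq_delayedExpPoly hτ ⟨hk.1.trans hu.1, hu.2⟩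
  refine HasDerivWithinAt.congr_of_eventuallyEq ?_ hev (delayedExp_eq_delayedExpPoly hτ hk)
  rcases k with _ | k
  · simp only [CharP.cast_eq_zero, zero_mul, zero_sub, mem_Ico] at hk
    rw [delayedExp_of_lt (by linarith), mul_zero, delayedExpPoly_zero]
    exact hasDerivWithinAt_const t _ 1
  · obtain ⟨hk₁, hk₂⟩ := hk
    push_cast at hk₁ hk₂
    rw [delayedExp_eq_delayedExpPoly hτ (k := k) ⟨by linarith, by linarith⟩]
    exact (hasDerivAt_delayedExpPoly_succ k t).hasDerivWithinAt

theorem continuousOn_delayedExp_Icc (hτ : 0 < τ) (k : ℕ) :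
    ContinuousOn (delayedExp β τ) (Icc (-τ) (k * τ)) := by
  induction k with
  | zero =>
    simp only [CharP.cast_eq_zero, zero_mul]
    exact continuousOn_const.congr fun t ht => delayedExp_eq_one hτ ht
  | succ k ih =>
    have hk : (0 : ℝ) ≤ k * τ := by positivity
    rw [← Icc_union_Icc_eq_Icc (b := k * τ) (by linarith) (by push_cast; linarith)]
    refine ih.union_of_isClosed ?_ isClosed_Icc isClosed_Icc
    refine (continuous_delayedExpPoly (β := β) (τ := τ) (k + 1)).continuousOn.congr fun t ht => ?_
    push_cast at ht
    exact delayedExp_eq_delayedExpPoly_of_mem_Icc hτ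
      (by push_cast; constructor <;> linarith [ht.1, ht.2])

theorem continuousOn_delayedExp (hτ : 0 < τ) : ContinuousOn (delayedExp β τ) (Ici (-τ)) := by
  intro t ht
  obtain ⟨k, hk⟩ := exists_nat_gt (t / τ)
  rw [div_lt_iff₀ hτ] at hk
  refine (continuousOn_delayedExp_Icc hτ k t ⟨ht, hk.le⟩).mono_of_mem_nhdsWithin ?_
  rw [← Ici_inter_Iic]
  exact inter_mem_nhdsWithin _ (Iic_mem_nhds hk)

end DelayedExp

theorem ContinuousOn.continuous_comp_max {f : ℝ → ℝ} {c : ℝ} (hf : ContinuousOn f (Ici c)) :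
    Continuous fun u => f (max u c) :=
  hf.comp_continuous (continuous_id.max continuous_const) fun u => le_max_right u c

theorem ContinuousOn.locallyIntegrable_of_eq_zero {f : ℝ → ℝ} {c : ℝ} (hf : ContinuousOn f (Ici c))
    (hf₀ : ∀ u < c, f u = 0) : LocallyIntegrable f := by
  have : f = (Ici c).indicator fun u => f (max u c) := by
    funext u
    by_cases hu : c ≤ u
    · simp [hu]
    · simp [hu, hf₀ u (not_le.1 hu)]
  rw [this]
  exact hf.continuous_comp_max.locallyIntegrable.indicator measurableSet_Ici

theorem ContinuousOn.locallyIntegrable_comp_sub {f : ℝ → ℝ} (hf : ContinuousOn f (Ici 0))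
    (hf₀ : ∀ u < 0, f u = 0) (τ : ℝ) : LocallyIntegrable fun w => f (w - τ) :=
  (hf.comp (by fun_prop) fun w hw => mem_Ici.2 (sub_nonneg.2 hw)).locallyIntegrable_of_eq_zero
    (c := τ) fun w hw => hf₀ _ (by linarith)

def volterraConv (K ρ : ℝ → ℝ) (t : ℝ) : ℝ :=
  ∫ s in (0 : ℝ)..t, K (t - s) * ρ s

section Volterra

variable {K ρ : ℝ → ℝ} {t T : ℝ}

theorem volterraConv_of_nonpos (hK₀ : ∀ u < 0, K u = 0) (ht : t ≤ 0) : volterraConv K ρ t = 0 := by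
  rw [volterraConv, intervalIntegral.integral_of_ge ht, neg_eq_zero]
  exact setIntegral_eq_zero_of_forall_eq_zero fun s hs => by
    rw [hK₀ _ (by linarith [hs.1]), zero_mul]

theorem volterraConv_eq_integral_of_le (hK₀ : ∀ u < 0, K u = 0) (htT : t ≤ T) (hT : 0 ≤ T) :
    volterraConv K ρ t = ∫ s in (0 : ℝ)..T, K (t - s) * ρ s := by
  rw [intervalIntegral.integral_of_le hT]
  rcases le_total t 0 with ht | ht
  · rw [volterraConv_of_nonpos hK₀ ht]
    exact (setIntegral_eq_zero_of_forall_eq_zero fun s hs => by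
      rw [hK₀ _ (by linarith [hs.1]), zero_mul]).symm
  · rw [volterraConv, intervalIntegral.integral_of_le ht]
    refine (setIntegral_eq_of_subset_of_forall_sdiff_eq_zero measurableSet_Ioc
      (Ioc_subset_Ioc_right htT) fun s hs => ?_).symm
    have hts : t < s := not_le.1 fun h => hs.2 ⟨hs.1.1, h⟩
    rw [hK₀ _ (by linarith), zero_mul]

theorem volterraConv_comp_sub (hK₀ : ∀ u < 0, K u = 0) {τ : ℝ} (hτ : 0 ≤ τ) (u : ℝ) :
    volterraConv (fun w => K (w - τ)) ρ u = volterraConv K ρ (u - τ) := by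
  rcases le_total u 0 with hu | hu
  · rw [volterraConv_of_nonpos (fun w hw => hK₀ _ (by linarith)) hu,
      volterraConv_of_nonpos hK₀ (by linarith)]
  · rw [volterraConv_eq_integral_of_le hK₀ (by linarith : u - τ ≤ u) hu, volterraConv]
    simp_rw [sub_right_comm]

theorem intervalIntegrable_volterraConv_integrand (hK : LocallyIntegrable K)
    (hρ : ContinuousOn ρ (Ici 0)) (hT : 0 ≤ T) (u : ℝ) :
    IntervalIntegrable (fun s => K (u - s) * ρ s) volume 0 T := by
  have hKu := ((hK.integrableOn_isCompact isCompact_uIcc).intervalIntegrable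
    (a := u - 0) (b := u - T)).comp_sub_left u
  simp only [sub_sub_cancel] at hKu
  exact hKu.mul_continuousOn (hρ.mono (by rw [uIcc_of_le hT]; exact Icc_subset_Ici_self))

theorem integrable_volterraConv_integrand_prod (hK : LocallyIntegrable K)
    (hρ : ContinuousOn ρ (Ici 0)) (T : ℝ) :
    Integrable (Function.uncurry fun u s => K (u - s) * ρ s)
      ((volume.restrict (Ioc 0 T)).prod (volume.restrict (Ioc 0 T))) := by
  have hρT : Integrable ((Ioc 0 T).indicator ρ) :=
    (integrable_indicator_iff measurableSet_Ioc).2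
      (((hρ.mono Icc_subset_Ici_self).integrableOn_compact isCompact_Icc).mono_set
        Ioc_subset_Icc_self)
  have hKT : Integrable ((Icc (-T) T).indicator K) :=
    (integrable_indicator_iff measurableSet_Icc).2 (hK.integrableOn_isCompact isCompact_Icc)
  rw [Measure.prod_restrict]
  refine ((hρT.convolution_integrand (ContinuousLinearMap.mul ℝ ℝ) hKT).restrict
    (μ := volume.prod volume)).congr ?_
  filter_upwards [ae_restrict_mem (measurableSet_Ioc.prod measurableSet_Ioc)] with p hp
  obtain ⟨⟨hu₀, huT⟩, ⟨hs₀, hsT⟩⟩ := hp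
  rw [indicator_of_mem (show p.2 ∈ Ioc 0 T from ⟨hs₀, hsT⟩),
    indicator_of_mem (show p.1 - p.2 ∈ Icc (-T) T from ⟨by linarith, by linarith⟩)]
  exact mul_comm _ _

theorem integral_comp_sub_of_eq_zero (hK : LocallyIntegrable K) (hK₀ : ∀ u < 0, K u = 0)
    {s : ℝ} (hs : 0 ≤ s) : ∫ u in (0 : ℝ)..T, K (u - s) = ∫ v in (0 : ℝ)..T - s, K v := by
  have hK' (a b : ℝ) : IntervalIntegrable K volume a b :=
    (hK.integrableOn_isCompact isCompact_uIcc).intervalIntegrable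
  have hneg : ∫ v in -s..0, K v = 0 := by
    rw [intervalIntegral.integral_of_le (by linarith), integral_Ioc_eq_integral_Ioo]
    exact setIntegral_eq_zero_of_forall_eq_zero fun v hv => hK₀ v hv.2
  rw [intervalIntegral.integral_comp_sub_right, zero_sub,
    ← intervalIntegral.integral_add_adjacent_intervals (hK' _ 0) (hK' 0 _), hneg, zero_add]

theorem integral_volterraConv (hK : LocallyIntegrable K) (hK₀ : ∀ u < 0, K u = 0)
    (hρ : ContinuousOn ρ (Ici 0)) (hT : 0 ≤ T) :
    ∫ u in (0 : ℝ)..T, volterraConv K ρ u = volterraConv (fun w => ∫ v in (0 : ℝ)..w, K v) ρ T :=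
  calc ∫ u in (0 : ℝ)..T, volterraConv K ρ u
      = ∫ u in (0 : ℝ)..T, ∫ s in (0 : ℝ)..T, K (u - s) * ρ s := by
        refine intervalIntegral.integral_congr fun u hu => ?_
        rw [uIcc_of_le hT] at hu
        exact volterraConv_eq_integral_of_le hK₀ hu.2 hT
    _ = ∫ s in (0 : ℝ)..T, ∫ u in (0 : ℝ)..T, K (u - s) * ρ s := by
        simp only [intervalIntegral.integral_of_le hT]
        exact integral_integral_swap (integrable_volterraConv_integrand_prod hK hρ T)
    _ = volterraConv (fun w => ∫ v in (0 : ℝ)..w, K v) ρ T := by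
        refine intervalIntegral.integral_congr fun s hs => ?_
        rw [uIcc_of_le hT] at hs
        rw [intervalIntegral.integral_mul_const, integral_comp_sub_of_eq_zero hK hK₀ hs.1]

theorem continuous_volterraConv (hK : ContinuousOn K (Ici 0)) (hK₀ : ∀ u < 0, K u = 0)
    (hρ : ContinuousOn ρ (Ici 0)) : Continuous (volterraConv K ρ) := by
  have hconv : volterraConv K ρ =
      fun t => ∫ s in (0 : ℝ)..max t 0, K (max (max t 0 - s) 0) * ρ (max s 0) := by
    funext t
    rcases le_total t 0 with ht | ht
    · rw [volterraConv_of_nonpos hK₀ ht, max_eq_right ht, intervalIntegral.integral_same]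
    · rw [max_eq_left ht, volterraConv]
      refine intervalIntegral.integral_congr fun s hs => ?_
      rw [uIcc_of_le ht] at hs
      simp only [max_eq_left hs.1, max_eq_left (sub_nonneg.2 hs.2)]
  rw [hconv]
  exact intervalIntegral.continuous_parametric_intervalIntegral_of_continuous
    ((hK.continuous_comp_max.comp (by fun_prop)).mul (hρ.continuous_comp_max.comp continuous_snd))
    (continuous_id.max continuous_const)

end Volterra

theorem hasDerivWithinAt_Ici_of_eq_integral {y g : ℝ → ℝ} (hg : ContinuousOn g (Ici 0))
    (hy : ∀ t ≥ 0, y t = ∫ u in (0 : ℝ)..t, g u) {t : ℝ} (ht : 0 ≤ t) :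
    HasDerivWithinAt y (g t) (Ici 0) t := by
  have hy' : ∀ t ≥ 0, y t = ∫ u in (0 : ℝ)..t, g (max u 0) := fun t ht => by
    rw [hy t ht]
    refine intervalIntegral.integral_congr fun u hu => ?_
    rw [uIcc_of_le ht] at hu
    simp only [max_eq_left hu.1]
  have hd := (hg.continuous_comp_max.integral_hasStrictDerivAt 0 t).hasDerivAt.hasDerivWithinAt
    (s := Ici 0)
  rw [max_eq_left ht] at hd
  exact hd.congr (fun u hu => hy' u hu) (hy' t ht)

section DelayEquation

variable {a b τ : ℝ} {K ρ : ℝ → ℝ}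

theorem volterraConv_eq_integral_delay (hτ : 0 ≤ τ) (hK : ContinuousOn K (Ici 0))
    (hK₀ : ∀ u < 0, K u = 0) (hK₁ : ∀ w ≥ 0, K w = 1 + ∫ v in (0 : ℝ)..w, (a * K v + b * K (v - τ)))
    (hρ : ContinuousOn ρ (Ici 0)) {T : ℝ} (hT : 0 ≤ T) :
    volterraConv K ρ T =
      ∫ u in (0 : ℝ)..T, (a * volterraConv K ρ u + b * volterraConv K ρ (u - τ) + ρ u) := by
  set L := fun w => a * K w + b * K (w - τ)
  have hKi : LocallyIntegrable K := hK.locallyIntegrable_of_eq_zero hK₀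
  have hKτi := hK.locallyIntegrable_comp_sub hK₀ τ
  have hL : LocallyIntegrable L := (hKi.smul a).add (hKτi.smul b)
  have hL₀ : ∀ u < 0, L u = 0 := fun u hu => by
    simp only [L, hK₀ u hu, hK₀ (u - τ) (by linarith), mul_zero, add_zero]
  have hρT : IntervalIntegrable ρ volume 0 T :=
    (hρ.mono Icc_subset_Ici_self).intervalIntegrable_of_Icc hT
  have hx := continuous_volterraConv hK hK₀ hρ
  have hcomb : Continuous fun u => a * volterraConv K ρ u + b * volterraConv K ρ (u - τ) := by
    fun_prop
  have hconvL : EqOn (fun u => a * volterraConv K ρ u + b * volterraConv K ρ (u - τ))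
      (volterraConv L ρ) (uIcc 0 T) := fun u hu => by
    rw [uIcc_of_le hT] at hu
    show a * volterraConv K ρ u + b * volterraConv K ρ (u - τ) = _
    rw [← volterraConv_comp_sub hK₀ hτ, volterraConv, volterraConv, volterraConv,
      ← intervalIntegral.integral_const_mul, ← intervalIntegral.integral_const_mul,
      ← intervalIntegral.integral_add
        ((intervalIntegrable_volterraConv_integrand hKi hρ hu.1 u).const_mul a)
        ((intervalIntegrable_volterraConv_integrand hKτi hρ hu.1 u).const_mul b)]
    refine intervalIntegral.integral_congr fun s _ => ?_
    simp only [L]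
    ring
  have hprim : volterraConv (fun w => ∫ v in (0 : ℝ)..w, L v) ρ T =
      volterraConv K ρ T - ∫ u in (0 : ℝ)..T, ρ u := by
    rw [volterraConv, volterraConv, ← intervalIntegral.integral_sub
      (intervalIntegrable_volterraConv_integrand hKi hρ hT T) hρT]
    refine intervalIntegral.integral_congr fun s hs => ?_
    rw [uIcc_of_le hT] at hs
    simp only [hK₁ (T - s) (by linarith [hs.2])]
    ring
  rw [intervalIntegral.integral_add (hcomb.intervalIntegrable 0 T) hρT,
    intervalIntegral.integral_congr hconvL,
    integral_volterraConv hL hL₀ hρ hT, hprim, sub_add_cancel]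

theorem isNonHomDelaySolution_volterraConv (hτ : 0 ≤ τ) (hK : ContinuousOn K (Ici 0))
    (hK₀ : ∀ u < 0, K u = 0) (hK₁ : ∀ w ≥ 0, K w = 1 + ∫ v in (0 : ℝ)..w, (a * K v + b * K (v - τ)))
    (hρ : ContinuousOn ρ (Ici 0)) : IsNonHomDelaySolution a b τ ρ (volterraConv K ρ) := by
  have hx := continuous_volterraConv hK hK₀ hρ
  have hg : ContinuousOn (fun u => a * volterraConv K ρ u + b * volterraConv K ρ (u - τ) + ρ u)
      (Ici 0) := by fun_prop
  have hderiv (t : ℝ) (ht : 0 ≤ t) := hasDerivWithinAt_Ici_of_eq_integral hg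
    (fun T hT => volterraConv_eq_integral_delay hτ hK hK₀ hK₁ hρ hT) ht
  exact ⟨hx.continuousOn, fun t ht => volterraConv_of_nonpos hK₀ ht.2,
    fun t ht => (hderiv t ht.le).hasDerivAt (Ici_mem_nhds ht), hderiv⟩

end DelayEquation

def delayKernel (a b τ u : ℝ) : ℝ :=
  Real.exp (a * u) * delayedExp (Real.exp (-a * τ) * b) τ (u - τ)

section DelayKernel

variable {a b τ u : ℝ}

theorem delayKernel_of_neg (hu : u < 0) : delayKernel a b τ u = 0 := by
  rw [delayKernel, delayedExp_of_lt (by linarith), mul_zero]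

theorem nonHomDelaySolution_eq_volterraConv (ρ : ℝ → ℝ) :
    nonHomDelaySolution a b τ ρ = volterraConv (delayKernel a b τ) ρ := by
  funext t
  rw [nonHomDelaySolution]
  split_ifs with ht
  · exact (volterraConv_of_nonpos (fun _ => delayKernel_of_neg) ht).symm
  · refine intervalIntegral.integral_congr fun s _ => ?_
    simp only [delayKernel, sub_right_comm t s τ]

theorem continuousOn_delayKernel (hτ : 0 < τ) : ContinuousOn (delayKernel a b τ) (Ici 0) :=
  (Real.continuous_exp.comp (continuous_const.mul continuous_id)).continuousOn.mul
    ((continuousOn_delayedExp hτ).comp (by fun_prop) fun u hu => by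
      simp only [mem_Ici] at hu ⊢
      linarith)

theorem hasDerivWithinAt_delayKernel (hτ : 0 < τ) (hu : 0 ≤ u) :
    HasDerivWithinAt (delayKernel a b τ)
      (a * delayKernel a b τ u + b * delayKernel a b τ (u - τ)) (Ici u) u := by
  set β := Real.exp (-a * τ) * b
  have hexp : HasDerivAt (fun v => Real.exp (a * v)) (Real.exp (a * u) * a) u := by
    simpa using ((hasDerivAt_id u).const_mul a).exp
  have hE : HasDerivWithinAt (fun v => delayedExp β τ (v - τ))
      (β * delayedExp β τ (u - τ - τ) * 1) (Ici u) u :=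
    (hasDerivWithinAt_delayedExp hτ (by linarith)).comp u
      ((hasDerivAt_id' u).sub_const τ).hasDerivWithinAt fun v hv => by
        simp only [mem_Ici] at hv ⊢
        linarith
  refine (hexp.hasDerivWithinAt.mul hE).congr_deriv ?_
  -- the factor `e^{-aτ}` in `β` turns `β e^{au}` into `b e^{a(u-τ)}`
  have hshift : Real.exp (a * (u - τ)) = Real.exp (a * u) * Real.exp (-a * τ) := by
    rw [← Real.exp_add]
    ring_nf
  simp only [delayKernel, hshift, β]
  ring

theorem delayKernel_eq_one_add_integral (hτ : 0 < τ) (hu : 0 ≤ u) :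
    delayKernel a b τ u =
      1 + ∫ v in (0 : ℝ)..u, (a * delayKernel a b τ v + b * delayKernel a b τ (v - τ)) := by
  have hK := continuousOn_delayKernel (a := a) (b := b) hτ
  have hK₀ : ∀ v < 0, delayKernel a b τ v = 0 := fun _ => delayKernel_of_neg
  have hint : LocallyIntegrable fun v => a * delayKernel a b τ v + b * delayKernel a b τ (v - τ) :=
    ((hK.locallyIntegrable_of_eq_zero hK₀).smul a).add
      ((hK.locallyIntegrable_comp_sub hK₀ τ).smul b)
  have hK_zero : delayKernel a b τ 0 = 1 := by
    simp [delayKernel, delayedExp_eq_one hτ ⟨le_rfl, neg_nonpos.2 hτ.le⟩]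
  rw [intervalIntegral.integral_eq_sub_of_hasDeriv_right_of_le hu (hK.mono Icc_subset_Ici_self)
    (fun v hv => (hasDerivWithinAt_delayKernel hτ hv.1.le).mono Ioi_subset_Ici_self)
    ((hint.integrableOn_isCompact isCompact_uIcc).intervalIntegrable), hK_zero]
  ring

end DelayKernel

section Uniqueness

variable {a b τ : ℝ}

theorem eqOn_zero_of_homogeneous_delay (hτ : 0 < τ) {w : ℝ → ℝ} (hw : ContinuousOn w (Ici (-τ)))
    (hw₀ : ∀ t ∈ Icc (-τ) 0, w t = 0)
    (hw' : ∀ t ≥ 0, HasDerivWithinAt w (a * w t + b * w (t - τ)) (Ici t) t) :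
    EqOn w 0 (Ici (-τ)) := by
  have hsteps (k : ℕ) : ∀ t ∈ Icc (-τ) (k * τ), w t = 0 := by
    induction k with
    | zero => simpa using hw₀
    | succ k ih =>
      intro t ht
      have hk : 0 ≤ (k : ℝ) * τ := by positivity
      push_cast at ht
      rcases le_total t (k * τ) with htk | htk
      · exact ih t ⟨ht.1, htk⟩
      refine eq_zero_of_abs_deriv_le_mul_abs_self_of_eq_zero_right (K := |a|)
        (hw.mono fun x hx => ?_) (fun x hx => hw' x (hk.trans hx.1))
        (ih _ ⟨by linarith, le_rfl⟩) (fun x hx => ?_) t ⟨htk, ht.2⟩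
      · simp only [mem_Ici]
        linarith [hx.1]
      · rw [ih (x - τ) ⟨by linarith [hx.1], by linarith [hx.2]⟩, mul_zero, add_zero, norm_mul,
          Real.norm_eq_abs]
  intro t ht
  obtain ⟨k, hk⟩ := exists_nat_ge (t / τ)
  exact hsteps k t ⟨ht, (div_le_iff₀ hτ).1 hk⟩

theorem IsNonHomDelaySolution.eqOn (hτ : 0 < τ) {ρ y z : ℝ → ℝ}
    (hy : IsNonHomDelaySolution a b τ ρ y) (hz : IsNonHomDelaySolution a b τ ρ z) :
    EqOn y z (Ici (-τ)) := by
  have hzero := eqOn_zero_of_homogeneous_delay (a := a) (b := b) hτ (hy.1.sub hz.1)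
    (fun t ht => by simp [hy.2.1 t ht, hz.2.1 t ht]) fun t ht =>
      (((hy.2.2.2 t ht).sub (hz.2.2.2 t ht)).mono (Ici_subset_Ici.2 ht)).congr_deriv (by
        simp only [Pi.sub_apply]
        ring)
  exact fun t ht => sub_eq_zero.1 (hzero ht)

end Uniqueness

/-- For continuous `ρ`, the non-homogeneous delay equation
`ẋ(t) = a x(t) + b x(t−τ) + ρ(t)` for `t > 0` with zero initial condition has the unique
solution `x̄(t) = 0` on `[−τ,0)` and `x̄(t) = ∫₀ᵗ e^{a(t−s)} exp_τ{b₁, t−τ−s} ρ(s) ds`. -/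
theorem nonhom_delay_ode_unique_solution
    (a b τ : ℝ) (hτ : 0 < τ) (ρ : ℝ → ℝ) (hρ : ContinuousOn ρ (Set.Ici 0)) :
    IsNonHomDelaySolution a b τ ρ (nonHomDelaySolution a b τ ρ) ∧
    ∀ y : ℝ → ℝ, IsNonHomDelaySolution a b τ ρ y →
      ∀ t ∈ Set.Ici (-τ), y t = nonHomDelaySolution a b τ ρ t := by
  have hx : IsNonHomDelaySolution a b τ ρ (nonHomDelaySolution a b τ ρ) := by
    rw [nonHomDelaySolution_eq_volterraConv]
    exact isNonHomDelaySolution_volterraConv hτ.le (continuousOn_delayKernel hτ)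
      (fun _ => delayKernel_of_neg) (fun _ => delayKernel_eq_one_add_integral hτ) hρ
  exact ⟨hx, fun y hy => hy.eqOn hτ hx⟩

end
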